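/- Let f: ℝⁿ → ℝᵏ be smooth with graph map F(x) = (x, f(x)), let s ∈ ℝ, and let X(y) = (1 + |y|)^{−s} y for y ∈ ℝⁿ⁺ᵏ. Then at every point x ∈ ℝⁿ with F(x) ≠ 0, div_Σ (X∘F)(x) = − s (1 + |F(x)|)^{−s−1} |F(x)^⊤|² / |F(x)| + n (1 + |F(x)|)^{−s}, where div_Σ Y (x) := Σ_{i,j} g^{ij}(x) ⟨∂_i Y(x), ∂_j F(x)⟩. -/

import Mathlib

open MeasureTheory Metric Filter Submodule
open scoped Topology RealInnerProductSpace NNReal ENNReal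

noncomputable section

/-- `E m` is Euclidean space `ℝ^m`. -/
abbrev E (m : ℕ) := EuclideanSpace ℝ (Fin m)

/-- The pairing `ℝ^n × ℝ^k → ℝ^{n+k}`. -/
def pairE {n k : ℕ} (u : E n) (v : E k) : E (n + k) :=
  WithLp.toLp 2 fun i => Fin.addCases (fun a => u a) (fun b => v b) i

/-- The graph map `F(x) = (x, f(x))`. -/
def graphMap {n k : ℕ} (f : E n → E k) (x : E n) : E (n + k) :=
  pairE x (f x)

/-- The partial derivative `∂_i f (x)`. -/
def pd {n k : ℕ} (f : E n → E k) (x : E n) (i : Fin n) : E k :=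
  fderiv ℝ f x (EuclideanSpace.single i 1)

/-- The second partial derivative `∂²_{ij} f (x)`. -/
def pd2 {n k : ℕ} (f : E n → E k) (x : E n) (i j : Fin n) : E k :=
  fderiv ℝ (fun y => fderiv ℝ f y (EuclideanSpace.single j 1)) x (EuclideanSpace.single i 1)

/-- The induced metric `g_{ij}(x) = δ_{ij} + ⟨∂_i f(x), ∂_j f(x)⟩` of the graph of `f`. -/
def gMat {n k : ℕ} (f : E n → E k) (x : E n) : Matrix (Fin n) (Fin n) ℝ :=
  Matrix.of fun i j => (if i = j then (1:ℝ) else 0) + ⟪pd f x i, pd f x j⟫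

/-- The tangent space `T_x` of the graph of `f`, spanned by the `∂_i F(x) = (e_i, ∂_i f(x))`. -/
def tangentSpace {n k : ℕ} (f : E n → E k) (x : E n) : Submodule ℝ (E (n + k)) :=
  Submodule.span ℝ (Set.range fun i : Fin n => pairE (EuclideanSpace.single i 1) (pd f x i))

/-- Orthogonal projection `v^⊤` onto the tangent space of the graph. -/
def tproj {n k : ℕ} (f : E n → E k) (x : E n) (v : E (n + k)) : E (n + k) :=
  (orthogonalProjection (tangentSpace f x) v : E (n + k))

/-- Orthogonal projection `v^⊥` onto the normal space of the graph. -/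
def perp {n k : ℕ} (f : E n → E k) (x : E n) (v : E (n + k)) : E (n + k) :=
  v - tproj f x v

/-- The mean curvature vector `H̄(x) = Σ g^{ij}(x) (0, ∂²_{ij} f(x))^⊥` of the graph of `f`. -/
def meanCurv {n k : ℕ} (f : E n → E k) (x : E n) : E (n + k) :=
  ∑ i : Fin n, ∑ j : Fin n, ((gMat f x)⁻¹ i j) • perp f x (pairE 0 (pd2 f x i j))

/-- The divergence `div_Σ Y (x) = Σ g^{ij}(x) ⟨∂_i Y(x), ∂_j F(x)⟩` of a vector field along
the graph of `f`. -/
def divSigma {n k : ℕ} (f : E n → E k) (Y : E n → E (n + k)) (x : E n) : ℝ :=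
  ∑ i : Fin n, ∑ j : Fin n, ((gMat f x)⁻¹ i j) *
    ⟪fderiv ℝ Y x (EuclideanSpace.single i 1), pairE (EuclideanSpace.single j 1) (pd f x j)⟫

/-! ### Auxiliary lemmas -/

@[simp] lemma pairE_castAdd {n k : ℕ} (u : E n) (v : E k) (a : Fin n) :
    pairE u v (Fin.castAdd k a) = u a := by simp [pairE]

@[simp] lemma pairE_natAdd {n k : ℕ} (u : E n) (v : E k) (b : Fin k) :
    pairE u v (Fin.natAdd n b) = v b := by simp [pairE]

/-- The pairing as a linear map. -/
def pairL (n k : ℕ) : (E n × E k) →ₗ[ℝ] E (n + k) where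
  toFun p := pairE p.1 p.2
  map_add' p q := by
    ext i
    induction i using Fin.addCases <;> simp
  map_smul' c p := by
    ext i
    induction i using Fin.addCases <;> simp

/-- The pairing as a continuous linear map. -/
def pairCLM (n k : ℕ) : (E n × E k) →L[ℝ] E (n + k) :=
  (pairL n k).toContinuousLinearMap

@[simp] lemma pairCLM_apply {n k : ℕ} (p : E n × E k) : pairCLM n k p = pairE p.1 p.2 := rfl

lemma inner_pairE {n k : ℕ} (u u' : E n) (v v' : E k) :
    ⟪pairE u v, pairE u' v'⟫ = ⟪u, u'⟫ + ⟪v, v'⟫ := by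
  simp only [PiLp.inner_apply, RCLike.inner_apply, starRingEnd_apply, star_trivial]
  rw [Fin.sum_univ_add]
  simp

/-- The tangent basis vectors. -/
def wv {n k : ℕ} (f : E n → E k) (x : E n) (i : Fin n) : E (n + k) :=
  pairE (EuclideanSpace.single i 1) (pd f x i)

section gram
variable {n k : ℕ} (f : E n → E k) (x : E n)

lemma gram_eq (i j : Fin n) : ⟪wv f x i, wv f x j⟫ = gMat f x i j := by
  rw [wv, wv, inner_pairE, gMat]
  simp [EuclideanSpace.inner_single_left, EuclideanSpace.single_apply, eq_comm]

lemma sum_smul_wv_castAdd (c : Fin n → ℝ) (a : Fin n) :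
    (∑ i, c i • wv f x i) (Fin.castAdd k a) = c a := by
  classical
  rw [WithLp.ofLp_sum, Finset.sum_apply]
  simp [wv, EuclideanSpace.single_apply]

lemma gMat_symm (i j : Fin n) : gMat f x j i = gMat f x i j := by
  simp only [gMat, Matrix.of_apply, real_inner_comm]
  congr 1
  simp [eq_comm]

lemma gMat_posDef : (gMat f x).PosDef := by
  refine Matrix.PosDef.of_dotProduct_mulVec_pos ?_ ?_
  · funext i j
    simp only [Matrix.conjTranspose_apply, star_trivial]
    exact gMat_symm f x i j
  intro c hc
  have key : dotProduct c ((gMat f x).mulVec c) = ‖∑ i, c i • wv f x i‖ ^ 2 := by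
    rw [← real_inner_self_eq_norm_sq, inner_sum]
    simp only [real_inner_smul_right, sum_inner, real_inner_smul_left, gram_eq]
    rw [dotProduct, Finset.sum_comm]
    congr 1; funext j
    rw [Matrix.mulVec, dotProduct, Finset.mul_sum]
    congr 1; funext i
    ring
  have hne : (∑ i, c i • wv f x i) ≠ 0 := by
    intro h0
    apply hc
    funext a
    have h := sum_smul_wv_castAdd f x c a
    rw [h0] at h
    simpa using h.symm
  have hst : star c = c := by funext i; simp
  rw [hst, key]
  have := norm_pos_iff.mpr hne
  positivity

lemma gMat_isUnit : IsUnit (gMat f x).det :=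
  (gMat_posDef f x).det_pos.ne'.isUnit

lemma gMat_mul_inv : gMat f x * (gMat f x)⁻¹ = 1 :=
  Matrix.mul_nonsing_inv _ (gMat_isUnit f x)

lemma gMat_inv_mul : (gMat f x)⁻¹ * gMat f x = 1 :=
  Matrix.nonsing_inv_mul _ (gMat_isUnit f x)

lemma trace_sum : ∑ i, ∑ j, (gMat f x)⁻¹ i j * gMat f x i j = (n : ℝ) := by
  have h : ∀ i : Fin n, ∑ j, (gMat f x)⁻¹ i j * gMat f x j i
      = (1 : Matrix (Fin n) (Fin n) ℝ) i i := by
    intro i; rw [← gMat_inv_mul f x, Matrix.mul_apply]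
  calc ∑ i, ∑ j, (gMat f x)⁻¹ i j * gMat f x i j
      = ∑ i, ∑ j, (gMat f x)⁻¹ i j * gMat f x j i := by
        congr 1; funext i; congr 1; funext j; rw [gMat_symm]
    _ = ∑ i : Fin n, (1 : Matrix (Fin n) (Fin n) ℝ) i i := by
        congr 1; funext i; exact h i
    _ = (n : ℝ) := by simp [Matrix.one_apply]

/-- Explicit formula for the tangential projection. -/
def projF (v : E (n + k)) : E (n + k) :=
  ∑ i, ∑ j, ((gMat f x)⁻¹ i j * ⟪v, wv f x j⟫) • wv f x i

lemma projF_mem (v : E (n + k)) : projF f x v ∈ tangentSpace f x := by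
  refine Submodule.sum_mem _ fun i _ => Submodule.sum_mem _ fun j _ => ?_
  exact Submodule.smul_mem _ _ (Submodule.subset_span ⟨i, rfl⟩)

lemma inner_projF (v : E (n + k)) (l : Fin n) :
    ⟪projF f x v, wv f x l⟫ = ⟪v, wv f x l⟫ := by
  classical
  have h1 : ∀ j, ∑ i, gMat f x l i * (gMat f x)⁻¹ i j
      = (1 : Matrix (Fin n) (Fin n) ℝ) l j := by
    intro j; rw [← gMat_mul_inv f x, Matrix.mul_apply]
  simp only [projF, sum_inner, real_inner_smul_left, gram_eq]
  rw [Finset.sum_comm]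
  calc ∑ j, ∑ i, (gMat f x)⁻¹ i j * ⟪v, wv f x j⟫ * gMat f x i l
      = ∑ j, (∑ i, gMat f x l i * (gMat f x)⁻¹ i j) * ⟪v, wv f x j⟫ := by
        congr 1; funext j; rw [Finset.sum_mul]; congr 1; funext i
        rw [gMat_symm f x i l]; ring
    _ = ∑ j, (1 : Matrix (Fin n) (Fin n) ℝ) l j * ⟪v, wv f x j⟫ := by
        congr 1; funext j; rw [h1 j]
    _ = ⟪v, wv f x l⟫ := by simp [Matrix.one_apply]

lemma inner_sub_projF (v : E (n + k)) : ∀ w ∈ tangentSpace f x, ⟪v - projF f x v, w⟫ = 0 := by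
  intro w hw
  induction hw using Submodule.span_induction with
  | mem w hw =>
      obtain ⟨l, rfl⟩ := hw
      have h : ⟪v - projF f x v, wv f x l⟫ = 0 := by
        rw [inner_sub_left, inner_projF, sub_self]
      exact h
  | zero => simp
  | add a b _ _ ha hb => rw [inner_add_right, ha, hb, add_zero]
  | smul c a _ ha => rw [real_inner_smul_right, ha, mul_zero]

lemma tproj_eq (v : E (n + k)) : tproj f x v = projF f x v :=
  eq_starProjection_of_mem_of_inner_eq_zero (projF_mem f x v) (inner_sub_projF f x v)

lemma norm_tproj_sq (v : E (n + k)) :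
    ‖tproj f x v‖ ^ 2 = ∑ i, ∑ j, (gMat f x)⁻¹ i j * (⟪v, wv f x i⟫ * ⟪v, wv f x j⟫) := by
  have h0 : ⟪v - projF f x v, projF f x v⟫ = 0 :=
    inner_sub_projF f x v _ (projF_mem f x v)
  have hvp : ⟪v, projF f x v⟫ = ‖projF f x v‖ ^ 2 := by
    rw [inner_sub_left, sub_eq_zero] at h0
    rw [h0, real_inner_self_eq_norm_sq]
  rw [tproj_eq, ← hvp, projF, inner_sum]
  congr 1; funext i
  rw [inner_sum]
  congr 1; funext j
  rw [real_inner_smul_right]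
  ring

end gram

section deriv
variable {n k : ℕ} (f : E n → E k) (x : E n)

/-- The derivative of the graph map. -/
def dGF (f : E n → E k) (x : E n) : E n →L[ℝ] E (n + k) :=
  (pairCLM n k).comp ((ContinuousLinearMap.id ℝ (E n)).prod (fderiv ℝ f x))

lemma dGF_single (i : Fin n) : dGF f x (EuclideanSpace.single i 1) = wv f x i := rfl

lemma hasFDerivAt_graphMap (hf : ContDiff ℝ (⊤ : ℕ∞) f) :
    HasFDerivAt (graphMap f) (dGF f x) x := by
  have hdf : HasFDerivAt f (fderiv ℝ f x) x :=
    (hf.differentiable (by simp) x).hasFDerivAt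
  exact ((pairCLM n k).hasFDerivAt).comp x (HasFDerivAt.prodMk (hasFDerivAt_id x) hdf)

lemma hasFDerivAt_norm_graph (hf : ContDiff ℝ (⊤ : ℕ∞) f) (hx : graphMap f x ≠ 0) :
    HasFDerivAt (fun y => ‖graphMap f y‖)
      (‖graphMap f x‖⁻¹ • ((innerSL ℝ (graphMap f x)).comp (dGF f x))) x := by
  have hr : 0 < ‖graphMap f x‖ := norm_pos_iff.mpr hx
  have hsq : HasFDerivAt (fun y => ‖graphMap f y‖ ^ 2)
      (2 • ((innerSL ℝ (graphMap f x)).comp (dGF f x))) x :=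
    (hasFDerivAt_graphMap f x hf).norm_sq
  have hs2 : (‖graphMap f x‖ ^ 2 : ℝ) ≠ 0 := by positivity
  have hsqrt := (Real.hasDerivAt_sqrt hs2).comp_hasFDerivAt x hsq
  have heq : ((fun t => Real.sqrt t) ∘ fun y => ‖graphMap f y‖ ^ 2)
      = fun y => ‖graphMap f y‖ := by
    funext y; simp [Function.comp, Real.sqrt_sq (norm_nonneg _)]
  rw [heq] at hsqrt
  refine hsqrt.congr_fderiv ?_
  rw [Real.sqrt_sq (norm_nonneg _)]
  ext w
  simp only [ContinuousLinearMap.smul_apply, smul_eq_mul, nsmul_eq_mul, Nat.cast_ofNat]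
  field_simp

lemma hasFDerivAt_phi (s : ℝ) (hf : ContDiff ℝ (⊤ : ℕ∞) f) (hx : graphMap f x ≠ 0) :
    HasFDerivAt (fun y => (1 + ‖graphMap f y‖) ^ (-s))
      ((-s * (1 + ‖graphMap f x‖) ^ (-s - 1)) •
        (‖graphMap f x‖⁻¹ • ((innerSL ℝ (graphMap f x)).comp (dGF f x)))) x := by
  have hr : 0 < ‖graphMap f x‖ := norm_pos_iff.mpr hx
  have h1 : HasFDerivAt (fun y => 1 + ‖graphMap f y‖)
      (‖graphMap f x‖⁻¹ • ((innerSL ℝ (graphMap f x)).comp (dGF f x))) x :=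
    (hasFDerivAt_norm_graph f x hf hx).const_add 1
  have hne : (1 + ‖graphMap f x‖ : ℝ) ≠ 0 := by positivity
  have hpow := Real.hasDerivAt_rpow_const (x := 1 + ‖graphMap f x‖) (p := -s) (Or.inl hne)
  have h2 := hpow.comp_hasFDerivAt x h1
  exact h2

end deriv

/-- For the radial vector field `X(y) = (1 + |y|)^{−s} y`, along the graph of
`f` one has, wherever `F(x) ≠ 0`,
`div_Σ (X∘F)(x) = −s (1+|F(x)|)^{−s−1} |F(x)^⊤|²/|F(x)| + n (1+|F(x)|)^{−s}`. -/
theorem divergence_radial_field {n k : ℕ} (hn : 1 ≤ n) (hk : 1 ≤ k)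
    (f : E n → E k) (hf : ContDiff ℝ (⊤ : ℕ∞) f) (s : ℝ) (x : E n) (hx : graphMap f x ≠ 0) :
    divSigma f (fun y => (1 + ‖graphMap f y‖) ^ (-s) • graphMap f y) x
      = - s * (1 + ‖graphMap f x‖) ^ (-s - 1) * ‖tproj f x (graphMap f x)‖ ^ 2
            / ‖graphMap f x‖
        + n * (1 + ‖graphMap f x‖) ^ (-s) := by
  classical
  have hr : 0 < ‖graphMap f x‖ := norm_pos_iff.mpr hx
  set r : ℝ := ‖graphMap f x‖ with hrdef
  set φx : ℝ := (1 + r) ^ (-s) with hφdef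
  set cφ : ℝ := -s * (1 + r) ^ (-s - 1) with hcdef
  have hY : HasFDerivAt (fun y => (1 + ‖graphMap f y‖) ^ (-s) • graphMap f y)
      (φx • dGF f x +
        (cφ • (r⁻¹ • ((innerSL ℝ (graphMap f x)).comp (dGF f x)))).smulRight (graphMap f x)) x :=
    (hasFDerivAt_phi f x s hf hx).smul (hasFDerivAt_graphMap f x hf)
  have hfd := hY.fderiv
  have heval : ∀ i : Fin n,
      fderiv ℝ (fun y => (1 + ‖graphMap f y‖) ^ (-s) • graphMap f y) x
        (EuclideanSpace.single i 1)
      = φx • wv f x i + (cφ * (r⁻¹ * ⟪graphMap f x, wv f x i⟫)) • graphMap f x := by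
    intro i
    rw [hfd]
    simp only [ContinuousLinearMap.add_apply, ContinuousLinearMap.smul_apply,
      ContinuousLinearMap.smulRight_apply, ContinuousLinearMap.comp_apply, innerSL_apply_apply,
      dGF_single, smul_eq_mul]
  have hinner : ∀ i j : Fin n,
      ⟪fderiv ℝ (fun y => (1 + ‖graphMap f y‖) ^ (-s) • graphMap f y) x
          (EuclideanSpace.single i 1), wv f x j⟫
      = φx * gMat f x i j
        + (cφ * r⁻¹) * (⟪graphMap f x, wv f x i⟫ * ⟪graphMap f x, wv f x j⟫) := by
    intro i j
    rw [heval i, inner_add_left, real_inner_smul_left, real_inner_smul_left, gram_eq]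
    ring
  have key : divSigma f (fun y => (1 + ‖graphMap f y‖) ^ (-s) • graphMap f y) x
      = ∑ i, ∑ j, (gMat f x)⁻¹ i j *
          (φx * gMat f x i j
            + (cφ * r⁻¹) * (⟪graphMap f x, wv f x i⟫ * ⟪graphMap f x, wv f x j⟫)) := by
    rw [divSigma]
    congr 1; funext i; congr 1; funext j
    congr 1
    exact hinner i j
  rw [key]
  have split : ∑ i, ∑ j, (gMat f x)⁻¹ i j *
      (φx * gMat f x i j
        + (cφ * r⁻¹) * (⟪graphMap f x, wv f x i⟫ * ⟪graphMap f x, wv f x j⟫))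
      = φx * (∑ i, ∑ j, (gMat f x)⁻¹ i j * gMat f x i j)
        + (cφ * r⁻¹) * (∑ i, ∑ j, (gMat f x)⁻¹ i j *
            (⟪graphMap f x, wv f x i⟫ * ⟪graphMap f x, wv f x j⟫)) := by
    rw [Finset.mul_sum, Finset.mul_sum, ← Finset.sum_add_distrib]
    congr 1; funext i
    rw [Finset.mul_sum, Finset.mul_sum, ← Finset.sum_add_distrib]
    congr 1; funext j
    ring
  rw [split, trace_sum, ← norm_tproj_sq]
  rw [hcdef]
  field_simp
  ring
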